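/- arXiv:2303.12147 — 3 statements merged into one kernel-verified Lean document; each statement's English description precedes it below -/
import Mathlib

section
/- Let σ : ℝ → ℝ be continuous and not equal to any polynomial. Then for every compact set Ω ⊂ ℝⁿ, every continuous function f : Ω → ℝⁿ, and every ε > 0, there exist N ∈ ℕ, matrices A_j, W_j ∈ ℝ^{n×n} and vectors b_j ∈ ℝⁿ for j = 0,…,N−1 such that the function g(x) := Σ_{j=0}^{N−1} A_j σ(W_j x + b_j) satisfies sup_{x ∈ Ω} ‖f(x) − g(x)‖ ≤ ε. -/
open Matrix

/-- Euclidean norm of a finitely-indexed real vector. -/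
noncomputable def euclNorm {m : Type*} [Fintype m] (v : m → ℝ) : ℝ :=
  Real.sqrt (∑ i, v i ^ 2)

/-- Entrywise application of a scalar function to a vector. -/
def entApp {m : Type*} (σ : ℝ → ℝ) (v : m → ℝ) : m → ℝ := fun i => σ (v i)

/-!
A network with matrix weights realises `x ↦ Σᵢ gᵢ(x) eᵢ` for any scalar ridge sums
`gᵢ(x) = Σⱼ cⱼ σ(wⱼ ⬝ᵥ x + bⱼ)` (one term is `A = c Eᵢᵢ`, every row of `W` equal to `w`, `b`
constant), so it suffices to approximate each coordinate of `f` by ridge sums.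

For that, let `S` be the uniform closure on the compact set `K` of the span of the ridge
functions of `σ`. The ridge functions of a mollification `g = φ ⋆ σ` are averages of translates of
those of `σ`, so they lie in `S`. Differentiating `g (w ⬝ᵥ x + b)` in `w` along `v` shows that `S`
contains `(v ⬝ᵥ x) g' (w ⬝ᵥ x + b)`; iterating, it contains `p(x) g⁽ᵏ⁾(w ⬝ᵥ x + b)` for every
product `p` of `k` linear forms. As `σ` is not a polynomial, some `g⁽ᵏ⁾(b)` is nonzero: otherwise
every `φ ⋆ σ`, and hence its pointwise limit `σ`, would lie in the closed finite-dimensional space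
of polynomials of degree `< k`. Taking `w = 0` puts every such `p` in `S`, and Stone–Weierstrass
gives `S = C(K, ℝ)`.
-/

open Filter Topology MeasureTheory
open scoped ContDiff Convolution

def monomialSpan (k : ℕ) : Submodule ℝ (ℝ → ℝ) :=
  Submodule.span ℝ (Set.range fun i : Fin k => fun t : ℝ => t ^ (i : ℕ))

lemma exists_hasDerivAt_mem_monomialSpan {k : ℕ} {g : ℝ → ℝ} (hg : g ∈ monomialSpan k) :
    ∃ G ∈ monomialSpan (k + 1), ∀ t, HasDerivAt G (g t) t := by
  induction hg using Submodule.span_induction with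
  | mem _ hg =>
    obtain ⟨i, rfl⟩ := hg
    have hi : ((i : ℕ) + 1 : ℝ) ≠ 0 := by positivity
    refine ⟨((i : ℕ) + 1 : ℝ)⁻¹ • fun t => t ^ ((i.succ : Fin (k + 1)) : ℕ),
      Submodule.smul_mem _ _ (Submodule.subset_span ⟨i.succ, rfl⟩), fun t => ?_⟩
    have := (hasDerivAt_pow ((i : ℕ) + 1) t).const_mul ((i : ℕ) + 1 : ℝ)⁻¹
    simp only [Nat.add_sub_cancel, Nat.cast_add, Nat.cast_one] at this
    rw [inv_mul_cancel_left₀ hi] at this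
    exact this
  | zero => exact ⟨0, zero_mem _, fun t => hasDerivAt_const t 0⟩
  | add g₁ g₂ _ _ ih₁ ih₂ =>
    obtain ⟨G₁, hG₁, h₁⟩ := ih₁
    obtain ⟨G₂, hG₂, h₂⟩ := ih₂
    exact ⟨G₁ + G₂, add_mem hG₁ hG₂, fun t => (h₁ t).add (h₂ t)⟩
  | smul c g _ ih =>
    obtain ⟨G, hG, h⟩ := ih
    exact ⟨c • G, Submodule.smul_mem _ c hG, fun t => (h t).const_mul c⟩

lemma mem_monomialSpan_of_iteratedDeriv_eq_zero :
    ∀ (k : ℕ) {f : ℝ → ℝ}, ContDiff ℝ ∞ f → iteratedDeriv k f = 0 → f ∈ monomialSpan k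
  | 0, f, _, hf => by simp_all
  | k + 1, f, hf, hk => by
    rw [iteratedDeriv_succ'] at hk
    obtain ⟨G, hG, hGf⟩ := exists_hasDerivAt_mem_monomialSpan
      (mem_monomialSpan_of_iteratedDeriv_eq_zero k (contDiff_infty_iff_deriv.mp hf).2 hk)
    have hderiv : ∀ t, HasDerivAt (f - G) 0 t := fun t => by
      simpa using (hf.differentiable (by simp) t).hasDerivAt.sub (hGf t)
    have hconst : ∀ t, (f - G) t = (f - G) 0 := fun t =>
      is_const_of_deriv_eq_zero (fun t => (hderiv t).differentiableAt) (fun t => (hderiv t).deriv)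
        t 0
    have hf_eq : f = G + (f 0 - G 0) • fun t : ℝ => t ^ ((0 : Fin (k + 1)) : ℕ) := by
      ext t
      have := hconst t
      simp only [Pi.sub_apply] at this
      simp [← this]
    rw [hf_eq]
    exact add_mem hG (Submodule.smul_mem _ _ (Submodule.subset_span ⟨0, rfl⟩))

lemma exists_iteratedDeriv_convolution_ne_zero {σ : ℝ → ℝ} (hσ : Continuous σ)
    (hσp : ¬ ∃ P : Polynomial ℝ, ∀ x, σ x = P.eval x) (k : ℕ) :
    ∃ (φ : ContDiffBump (0 : ℝ)) (b : ℝ),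
      iteratedDeriv k (φ.normed volume ⋆[ContinuousLinearMap.lsmul ℝ ℝ] σ) b ≠ 0 := by
  by_contra! h
  apply hσp
  let φ : ℕ → ContDiffBump (0 : ℝ) := fun m =>
    ⟨1 / (m + 2), 1 / (m + 1), by positivity, by gcongr; linarith⟩
  have hmem : ∀ m, (φ m).normed volume ⋆[ContinuousLinearMap.lsmul ℝ ℝ] σ ∈ monomialSpan k :=
    fun m => mem_monomialSpan_of_iteratedDeriv_eq_zero k
      ((φ m).hasCompactSupport_normed.contDiff_convolution_left _ (φ m).contDiff_normed
        hσ.locallyIntegrable) (funext (h (φ m)))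
  have hlim : Tendsto (fun m => (φ m).normed volume ⋆[ContinuousLinearMap.lsmul ℝ ℝ] σ) atTop
      (𝓝 σ) :=
    tendsto_pi_nhds.2 fun x => ContDiffBump.convolution_tendsto_right_of_continuous
      tendsto_one_div_add_atTop_nhds_zero_nat hσ x
  have : FiniteDimensional ℝ (monomialSpan k) :=
    FiniteDimensional.span_of_finite ℝ (Set.finite_range _)
  have hσk : σ ∈ monomialSpan k :=
    (Submodule.closed_of_finiteDimensional _).mem_of_tendsto hlim (Eventually.of_forall hmem)
  obtain ⟨c, hc⟩ := (Submodule.mem_span_range_iff_exists_fun ℝ).mp hσk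
  exact ⟨∑ i, Polynomial.C (c i) * Polynomial.X ^ (i : ℕ),
    fun x => by simp [← hc, Polynomial.eval_finsetSum]⟩

lemma mul_integral_comp_mul_add_of_hasDerivAt {g g' : ℝ → ℝ} (hg : ∀ t, HasDerivAt g (g' t) t)
    (hg' : Continuous g') (a d : ℝ) :
    d * ∫ s in (0 : ℝ)..1, g' (d * s + a) = g (d + a) - g a := by
  rw [intervalIntegral.mul_integral_comp_mul_add, mul_zero, zero_add, mul_one,
    intervalIntegral.integral_eq_sub_of_hasDerivAt (fun t _ => hg t) (hg'.intervalIntegrable _ _)]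

lemma Submodule.integral_mem_of_isClosed {E X : Type*} [NormedAddCommGroup E] [NormedSpace ℝ E]
    [CompleteSpace E] [MeasurableSpace X] {μ : Measure X} {S : Submodule ℝ E}
    (hS : IsClosed (S : Set E)) {F : X → E} (hF : ∀ x, F x ∈ S) : ∫ x, F x ∂μ ∈ S := by
  have := hS.completeSpace_coe
  have key : ∫ x, F x ∂μ = S.subtypeₗᵢ (∫ x, (⟨F x, hF x⟩ : S) ∂μ) :=
    S.subtypeₗᵢ.integral_comp_comm (fun x => (⟨F x, hF x⟩ : S))
  rw [key]
  exact SetLike.coe_mem _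

def IsDerivSeq (g : ℕ → C(ℝ, ℝ)) : Prop :=
  ∀ j t, HasDerivAt (g j) (g (j + 1) t) t

section Ridge

variable {ι : Type*} [Fintype ι]

def ridge (g : C(ℝ, ℝ)) (w : ι → ℝ) (b : ℝ) : C(ι → ℝ, ℝ) :=
  g.comp ⟨fun x => w ⬝ᵥ x + b, by fun_prop⟩

@[simp]
lemma ridge_apply (g : C(ℝ, ℝ)) (w : ι → ℝ) (b : ℝ) (x : ι → ℝ) :
    ridge g w b x = g (w ⬝ᵥ x + b) := rfl

def linearForm (v : ι → ℝ) : C(ι → ℝ, ℝ) := ⟨fun x => v ⬝ᵥ x, by fun_prop⟩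

@[simp]
lemma linearForm_apply (v x : ι → ℝ) : linearForm v x = v ⬝ᵥ x := rfl

def ridgeSpan (σ : C(ℝ, ℝ)) : Submodule ℝ C(ι → ℝ, ℝ) :=
  Submodule.span ℝ (Set.range fun p : (ι → ℝ) × ℝ => ridge σ p.1 p.2)

section ClosedSubmodule

variable {K : Set (ι → ℝ)} {S : Submodule ℝ C(K, ℝ)}

lemma mul_linearForm_mul_ridge_mem (hS : IsClosed (S : Set C(K, ℝ))) {g g' : C(ℝ, ℝ)}
    (hg : ∀ t, HasDerivAt g (g' t) t) (q : C(K, ℝ))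
    (h : ∀ w b, q * (ridge g w b).restrict K ∈ S) (v w : ι → ℝ) (b : ℝ) :
    q * (linearForm v).restrict K * (ridge g' w b).restrict K ∈ S := by
  -- for `t ≠ 0`, `Φ.curry t` is the difference quotient of `t ↦ q * ridge g (w + t • v) b`;
  -- the integral form shows that it extends continuously to `t = 0`
  let Φ : C(ℝ × K, ℝ) := ⟨fun p => q p.2 * (v ⬝ᵥ p.2) *
      ∫ s in (0 : ℝ)..1, g' (p.1 * (v ⬝ᵥ p.2) * s + (w ⬝ᵥ p.2 + b)), by
    refine Continuous.mul (by fun_prop) ?_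
    exact intervalIntegral.continuous_parametric_intervalIntegral_of_continuous' (by fun_prop) _ _⟩
  have hΦ₀ : Φ.curry 0 = q * (linearForm v).restrict K * (ridge g' w b).restrict K := by
    ext x; simp [Φ]
  have hΦ : ∀ t ≠ 0, Φ.curry t =
      t⁻¹ • (q * (ridge g (w + t • v) b).restrict K - q * (ridge g w b).restrict K) := by
    intro t ht
    ext x
    have := mul_integral_comp_mul_add_of_hasDerivAt hg g'.continuous (w ⬝ᵥ x + b) (t * (v ⬝ᵥ x))
    simp only [ContinuousMap.curry_apply, ContinuousMap.coe_mk, ContinuousMap.smul_apply,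
      ContinuousMap.sub_apply, ContinuousMap.mul_apply, ContinuousMap.restrict_apply, ridge_apply,
      add_dotProduct, smul_dotProduct, smul_eq_mul, Φ]
    rw [show w ⬝ᵥ ↑x + t * v ⬝ᵥ ↑x + b = t * v ⬝ᵥ ↑x + (w ⬝ᵥ ↑x + b) by ring, ← mul_sub, ← this]
    field_simp
  rw [← hΦ₀]
  refine hS.mem_of_tendsto
    ((Φ.curry.continuous.tendsto 0).mono_left (nhdsWithin_le_nhds (s := {0}ᶜ))) ?_
  filter_upwards [self_mem_nhdsWithin] with t ht
  rw [hΦ t ht]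
  exact S.smul_mem _ (S.sub_mem (h _ _) (h _ _))

lemma exists_mul_mul_ridge_mem_of_mem_closure (hS : IsClosed (S : Set C(K, ℝ))) {f : C(K, ℝ)}
    (hf : f ∈ Submonoid.closure (Set.range fun v => (linearForm v).restrict K)) :
    ∃ k, ∀ (q : C(K, ℝ)) (g : ℕ → C(ℝ, ℝ)), IsDerivSeq g →
      (∀ w b, q * (ridge (g 0) w b).restrict K ∈ S) →
      ∀ w b, q * f * (ridge (g k) w b).restrict K ∈ S := by
  induction hf using Submonoid.closure_induction with
  | mem _ hf =>
    obtain ⟨v, rfl⟩ := hf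
    exact ⟨1, fun q g hg h => mul_linearForm_mul_ridge_mem hS (hg 0) q h v⟩
  | one => exact ⟨0, fun q g _ h => by simpa using h⟩
  | mul f₁ f₂ _ _ ih₁ ih₂ =>
    obtain ⟨k₁, h₁⟩ := ih₁
    obtain ⟨k₂, h₂⟩ := ih₂
    refine ⟨k₁ + k₂, fun q g hg h w b => ?_⟩
    rw [← mul_assoc]
    exact h₂ (q * f₁) (fun j => g (k₁ + j)) (fun j => hg (k₁ + j)) (h₁ q g hg h) w b

lemma adjoin_linearForm_le (hS : IsClosed (S : Set C(K, ℝ)))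
    (hS' : ∀ k, ∃ g, IsDerivSeq g ∧ (∀ w b, (ridge (g 0) w b).restrict K ∈ S) ∧ ∃ b, g k b ≠ 0) :
    Subalgebra.toSubmodule (Algebra.adjoin ℝ (Set.range fun v => (linearForm v).restrict K)) ≤
      S := by
  rw [Algebra.adjoin_eq_span, Submodule.span_le]
  intro f hf
  obtain ⟨k, hk⟩ := exists_mul_mul_ridge_mem_of_mem_closure hS hf
  obtain ⟨g, hg, hg₀, b, hb⟩ := hS' k
  have hmem := hk 1 g hg (by simpa using hg₀) 0 b
  have hconst : (ridge (g k) 0 b).restrict K = algebraMap ℝ C(K, ℝ) (g k b) := by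
    ext x; simp
  rw [one_mul, hconst, ← Algebra.commutes, ← Algebra.smul_def] at hmem
  simpa [hb] using S.smul_mem (g k b)⁻¹ hmem

lemma eq_top_of_forall_exists_isDerivSeq [CompactSpace K] (hS : IsClosed (S : Set C(K, ℝ)))
    (hS' : ∀ k, ∃ g, IsDerivSeq g ∧ (∀ w b, (ridge (g 0) w b).restrict K ∈ S) ∧ ∃ b, g k b ≠ 0) :
    S = ⊤ := by
  set A := Algebra.adjoin ℝ (Set.range fun v => (linearForm v).restrict K)
  have hsep : A.SeparatesPoints := by
    classical
    intro x y hxy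
    obtain ⟨i, hi⟩ := Function.ne_iff.mp (Subtype.coe_injective.ne hxy)
    refine ⟨_, ⟨_, Algebra.subset_adjoin ⟨Pi.single i 1, rfl⟩, rfl⟩, ?_⟩
    simpa using hi
  have hA := ContinuousMap.subalgebra_topologicalClosure_eq_top_of_separatesPoints A hsep
  refine eq_top_iff.mpr fun f _ => ?_
  have hf : f ∈ closure (A : Set C(K, ℝ)) := by
    rw [← Subalgebra.topologicalClosure_coe, hA]; trivial
  exact closure_minimal (adjoin_linearForm_le hS hS') hS hf

lemma ridge_mem_of_eq_convolution [CompactSpace K] (hS : IsClosed (S : Set C(K, ℝ)))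
    {σ g : C(ℝ, ℝ)} (hσ : ∀ w b, (ridge σ w b).restrict K ∈ S) {ψ : ℝ → ℝ} (hψ : Continuous ψ)
    (hψc : HasCompactSupport ψ) (hg : ⇑g = ψ ⋆[ContinuousLinearMap.lsmul ℝ ℝ] σ)
    (w : ι → ℝ) (b : ℝ) :
    (ridge g w b).restrict K ∈ S := by
  let F : ℝ → C(K, ℝ) := fun s => ψ s • (ridge σ w (b - s)).restrict K
  have hF : Continuous F := hψ.smul
    (ContinuousMap.curry ⟨fun p : ℝ × K => σ (w ⬝ᵥ p.2 + (b - p.1)), by fun_prop⟩).continuous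
  have hgF : (ridge g w b).restrict K = ∫ s, F s := by
    ext x
    rw [ContinuousMap.integral_apply (hF.integrable_of_hasCompactSupport hψc.smul_right)]
    simp [F, hg, convolution_def, add_sub_assoc]
  rw [hgF]
  exact S.integral_mem_of_isClosed hS fun s => S.smul_mem _ (hσ _ _)

end ClosedSubmodule

theorem topologicalClosure_map_restrict_ridgeSpan_eq_top {σ : C(ℝ, ℝ)}
    (hσ : ¬ ∃ P : Polynomial ℝ, ∀ x, σ x = P.eval x) (K : Set (ι → ℝ)) [CompactSpace K] :
    ((ridgeSpan σ).map (ContinuousMap.compRightAlgHom ℝ ℝ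
      (ContinuousMap.restrict K (.id _))).toLinearMap).topologicalClosure = ⊤ := by
  set S := ((ridgeSpan σ).map (ContinuousMap.compRightAlgHom ℝ ℝ
      (ContinuousMap.restrict K (.id _))).toLinearMap).topologicalClosure
  have hS : IsClosed (S : Set C(K, ℝ)) := Submodule.isClosed_topologicalClosure _
  have hσS : ∀ w b, (ridge σ w b).restrict K ∈ S := fun w b =>
    Submodule.le_topologicalClosure _
      (Submodule.mem_map_of_mem (Submodule.subset_span ⟨(w, b), rfl⟩))
  refine eq_top_of_forall_exists_isDerivSeq hS fun k => ?_
  obtain ⟨φ, b, hb⟩ := exists_iteratedDeriv_convolution_ne_zero σ.continuous hσ k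
  have hsmooth : ContDiff ℝ ∞ (φ.normed volume ⋆[ContinuousLinearMap.lsmul ℝ ℝ] σ) :=
    φ.hasCompactSupport_normed.contDiff_convolution_left _ φ.contDiff_normed
      σ.continuous.locallyIntegrable
  refine ⟨fun j => ⟨_, hsmooth.continuous_iteratedDeriv j (mod_cast le_top)⟩, fun j t => ?_,
    ridge_mem_of_eq_convolution hS hσS φ.continuous_normed φ.hasCompactSupport_normed rfl, b, hb⟩
  simp only [ContinuousMap.coe_mk, iteratedDeriv_succ]
  exact ((hsmooth.differentiable_iteratedDeriv j (mod_cast WithTop.coe_lt_top _)) t).hasDerivAt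

theorem exists_mem_ridgeSpan_abs_sub_le {σ : C(ℝ, ℝ)}
    (hσ : ¬ ∃ P : Polynomial ℝ, ∀ x, σ x = P.eval x) {K : Set (ι → ℝ)} (hK : IsCompact K)
    {f : (ι → ℝ) → ℝ} (hf : ContinuousOn f K) {ε : ℝ} (hε : 0 < ε) :
    ∃ G ∈ ridgeSpan σ, ∀ x ∈ K, |f x - G x| ≤ ε := by
  have := isCompact_iff_compactSpace.mp hK
  have hmem : (⟨K.domRestrict f, continuousOn_iff_continuous_domRestrict.mp hf⟩ : C(K, ℝ)) ∈ closure
      ((ridgeSpan σ).map (ContinuousMap.compRightAlgHom ℝ ℝ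
        (ContinuousMap.restrict K (.id _))).toLinearMap : Set C(K, ℝ)) := by
    rw [← Submodule.topologicalClosure_coe, topologicalClosure_map_restrict_ridgeSpan_eq_top hσ]
    trivial
  obtain ⟨_, ⟨G, hG, rfl⟩, hdist⟩ := Metric.mem_closure_iff.mp hmem ε hε
  refine ⟨G, hG, fun x hx => ?_⟩
  have := (ContinuousMap.dist_apply_le_dist ⟨x, hx⟩).trans hdist.le
  rwa [Real.dist_eq] at this

def shallowNets (σ : ℝ → ℝ) : Submodule ℝ ((ι → ℝ) → ι → ℝ) where
  carrier := {F | ∃ (N : ℕ) (A W : ℕ → Matrix ι ι ℝ) (b : ℕ → ι → ℝ),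
    F = fun x => ∑ j ∈ Finset.range N, A j *ᵥ entApp σ (W j *ᵥ x + b j)}
  zero_mem' := ⟨0, 0, 0, 0, by simp only [Finset.range_zero, Finset.sum_empty]; rfl⟩
  add_mem' := by
    rintro _ _ ⟨N, A, W, b, rfl⟩ ⟨N', A', W', b', rfl⟩
    refine ⟨N + N', fun j => if j < N then A j else A' (j - N),
      fun j => if j < N then W j else W' (j - N), fun j => if j < N then b j else b' (j - N), ?_⟩
    funext x
    rw [Pi.add_apply, Finset.sum_range_add]
    congr 1
    · exact Finset.sum_congr rfl fun j hj => by simp [Finset.mem_range.mp hj]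
    · simp
  smul_mem' := by
    rintro c _ ⟨N, A, W, b, rfl⟩
    exact ⟨N, c • A, W, b, by funext x; simp [Finset.smul_sum, smul_mulVec]⟩

lemma single_ridge_mem_shallowNets [DecidableEq ι] (σ : C(ℝ, ℝ)) (i : ι) (w : ι → ℝ) (c : ℝ) :
    (fun x => Pi.single i (ridge σ w c x)) ∈ shallowNets σ := by
  refine ⟨1, fun _ => Matrix.single i i 1, fun _ => Matrix.of fun _ => w, fun _ _ => c, ?_⟩
  funext x
  simp [entApp, single_mulVec, mulVec, Pi.single]

lemma mem_shallowNets_of_mem_ridgeSpan [DecidableEq ι] {σ : C(ℝ, ℝ)} {G : ι → C(ι → ℝ, ℝ)}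
    (hG : ∀ i, G i ∈ ridgeSpan σ) : (fun x i => G i x) ∈ shallowNets σ := by
  let T (i : ι) : C(ι → ℝ, ℝ) →ₗ[ℝ] (ι → ℝ) → ι → ℝ :=
    (LinearMap.single ℝ (fun _ => ℝ) i).compLeft _ ∘ₗ ContinuousMap.coeFnLinearMap ℝ
  have hT (i : ι) : ridgeSpan σ ≤ (shallowNets σ).comap (T i) := by
    refine Submodule.span_le.mpr ?_
    rintro _ ⟨⟨w, c⟩, rfl⟩
    exact single_ridge_mem_shallowNets σ i w c
  have hsum : (fun x i => G i x) = ∑ i, T i (G i) := by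
    ext x r
    simp [T, Finset.sum_apply, Pi.single_apply]
  rw [hsum]
  exact Submodule.sum_mem _ fun i _ => hT i (hG i)

lemma euclNorm_le_sum_abs (v : ι → ℝ) : euclNorm v ≤ ∑ i, |v i| := by
  rw [euclNorm, Real.sqrt_le_iff]
  refine ⟨by positivity, ?_⟩
  simpa only [sq_abs] using Finset.sum_sq_le_sq_sum_of_nonneg fun i _ => abs_nonneg (v i)

end Ridge

/-- UAP of one-hidden-layer sums `g(x) = Σ_j A_j σ(W_j x + b_j)` with matrix coefficients:
for continuous non-polynomial `σ`, any continuous `f : Ω → ℝⁿ` on a compact `Ω ⊂ ℝⁿ`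
can be approximated uniformly within `ε`. -/
theorem matrix_shallow_UAP {n : ℕ} (σ : ℝ → ℝ) (hσc : Continuous σ)
    (hσpoly : ¬ ∃ P : Polynomial ℝ, ∀ x : ℝ, σ x = P.eval x)
    (Ω : Set (Fin n → ℝ)) (hΩ : IsCompact Ω)
    (f : (Fin n → ℝ) → (Fin n → ℝ)) (hf : ContinuousOn f Ω)
    (ε : ℝ) (hε : 0 < ε) :
    ∃ (N : ℕ) (A W : ℕ → Matrix (Fin n) (Fin n) ℝ) (b : ℕ → (Fin n → ℝ)),
      ∀ x ∈ Ω,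
        euclNorm (f x - ∑ j ∈ Finset.range N, (A j).mulVec (entApp σ ((W j).mulVec x + b j)))
          ≤ ε := by
  choose G hG hGf using fun i : Fin n =>
    exists_mem_ridgeSpan_abs_sub_le (σ := ⟨σ, hσc⟩) hσpoly hΩ
      ((continuous_apply i).comp_continuousOn hf) (by positivity : 0 < ε / (n + 1))
  obtain ⟨N, A, W, b, hnet⟩ := mem_shallowNets_of_mem_ridgeSpan hG
  refine ⟨N, A, W, b, fun x hx => ?_⟩
  have hGx : (fun i => G i x) = ∑ j ∈ Finset.range N, A j *ᵥ entApp σ (W j *ᵥ x + b j) :=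
    congrFun hnet x
  calc euclNorm (f x - ∑ j ∈ Finset.range N, (A j).mulVec (entApp σ ((W j).mulVec x + b j)))
      = euclNorm (fun i => f x i - G i x) := by rw [← hGx]; rfl
    _ ≤ ∑ i, |f x i - G i x| := euclNorm_le_sum_abs _
    _ ≤ ∑ _i : Fin n, ε / (n + 1) := Finset.sum_le_sum fun i _ => hGf i x hx
    _ ≤ ε := by
      rw [Finset.sum_const, Finset.card_univ, Fintype.card_fin, nsmul_eq_mul, mul_div_assoc']
      exact div_le_of_le_mul₀ (by positivity) hε.le (by linarith)
end

section
/- Let σ : ℝ → ℝ be Lipschitz continuous, let Ω ⊂ ℝⁿ be compact, let N ∈ ℕ, and let g(x) := Σ_{j=0}^{N−1} A_j σ(W_j x + b_j) with A_j, W_j ∈ ℝ^{n×n} and b_j ∈ ℝⁿ. Then for every ε̃ > 0 there exist matrices Ã_j, W̃_j ∈ ℝ^{n×n} with every W̃_j invertible and vectors b̃_j ∈ ℝⁿ, j = 0,…,N−1, such that the function g̃(x) := Σ_{j=0}^{N−1} Ã_j σ(W̃_j x + b̃_j) satisfies sup_{x ∈ Ω} ‖g̃(x) − g(x)‖ ≤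 ε̃. -/
open Matrix

lemma det_smul_one_sub_aux {n : ℕ} (M : Matrix (Fin n) (Fin n) ℝ) (t : ℝ) :
    (t • (1 : Matrix (Fin n) (Fin n) ℝ) - M).det = M.charpoly.eval t := by
  rw [Matrix.charpoly, ← Polynomial.coe_evalRingHom, RingHom.map_det]
  congr 1
  ext i j
  by_cases h : i = j <;>
    simp [h, Matrix.charmatrix_apply, Matrix.one_apply, Matrix.diagonal_apply,
      Matrix.sub_apply, Matrix.smul_apply, smul_eq_mul]

/-- Any sum `g(x) = Σ_{j<N} A_j σ(W_j x + b_j)` with Lipschitz `σ` can be uniformly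
approximated on a compact set `Ω`, to any accuracy `ε̃ > 0`, by a sum of the same form
whose matrices `W̃_j` are all invertible (nonzero determinant). -/
theorem full_rank_perturbation {n : ℕ} (σ : ℝ → ℝ)
    (hσLip : ∃ K : NNReal, LipschitzWith K σ)
    (Ω : Set (Fin n → ℝ)) (hΩ : IsCompact Ω)
    (N : ℕ) (A W : ℕ → Matrix (Fin n) (Fin n) ℝ) (b : ℕ → (Fin n → ℝ))
    (ε' : ℝ) (hε' : 0 < ε') :
    ∃ (A' W' : ℕ → Matrix (Fin n) (Fin n) ℝ) (b' : ℕ → (Fin n → ℝ)),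
      (∀ j < N, (W' j).det ≠ 0) ∧
      ∀ x ∈ Ω,
        euclNorm ((∑ j ∈ Finset.range N, (A' j).mulVec (entApp σ ((W' j).mulVec x + b' j)))
            - ∑ j ∈ Finset.range N, (A j).mulVec (entApp σ ((W j).mulVec x + b j)))
          ≤ ε' := by
  obtain ⟨K, hK⟩ := hσLip
  have hσc : Continuous σ := hK.continuous
  set h : ℝ × (Fin n → ℝ) → ℝ := fun p =>
    euclNorm ((∑ j ∈ Finset.range N,
        (A j).mulVec (entApp σ ((W j + p.1 • 1).mulVec p.2 + b j)))
      - ∑ j ∈ Finset.range N, (A j).mulVec (entApp σ ((W j).mulVec p.2 + b j))) with hh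
  have hcont : Continuous h := by
    rw [hh]
    unfold euclNorm entApp Matrix.mulVec dotProduct
    simp only [Finset.sum_apply, Pi.add_apply, Pi.sub_apply, Matrix.add_apply,
      Matrix.smul_apply, Matrix.one_apply, smul_eq_mul, Matrix.of_apply]
    fun_prop
  have hU : IsOpen {p : ℝ × (Fin n → ℝ) | h p < ε'} :=
    isOpen_lt hcont continuous_const
  have hsub : ({(0 : ℝ)} : Set ℝ) ×ˢ Ω ⊆ {p | h p < ε'} := by
    rintro ⟨t, x⟩ ⟨ht, hx⟩
    simp only [Set.mem_singleton_iff] at ht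
    subst ht
    simp [hh, euclNorm, hε']
  obtain ⟨u, v, hu, hv, h0u, hΩv, huv⟩ :=
    generalized_tube_lemma isCompact_singleton hΩ hU hsub
  have h0u' : u ∈ nhds (0 : ℝ) := hu.mem_nhds (h0u rfl)
  obtain ⟨δ, hδ, hball⟩ := Metric.mem_nhds_iff.mp h0u'
  have hIoo : Set.Ioo (-δ) δ ⊆ u := by
    intro t ht
    exact hball (by simpa [Real.ball_eq_Ioo] using ht)
  -- bad set of t's: roots of charpolys
  have hbad : (⋃ j ∈ Finset.range N,
      {t : ℝ | ((-(W j)).charpoly).IsRoot t}).Finite := by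
    apply Set.Finite.biUnion (Finset.range N).finite_toSet
    intro j _
    exact Polynomial.finite_setOf_isRoot (Matrix.charpoly_monic _).ne_zero
  have hinf : (Set.Ioo (-δ) δ).Infinite :=
    Set.Ioo_infinite (by linarith : -δ < δ)
  obtain ⟨t, htIoo, htbad⟩ := (hinf.diff hbad).nonempty
  refine ⟨A, fun j => W j + t • 1, b, ?_, ?_⟩
  · intro j hj
    show (W j + t • 1).det ≠ 0
    have : (W j + t • 1) = t • (1 : Matrix (Fin n) (Fin n) ℝ) - (-(W j)) := by
      module
    rw [this, det_smul_one_sub_aux]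
    intro hzero
    exact htbad (Set.mem_biUnion (Finset.mem_range.mpr hj) hzero)
  · intro x hx
    have : (t, x) ∈ u ×ˢ v := ⟨hIoo htIoo, hΩv hx⟩
    have := huv this
    exact le_of_lt this
end

section
/- Fix n, N ∈ ℕ, h > 0, σ : ℝ → ℝ, X ∈ ℝ^{n×n}, and, for j = 0,…,N−1, W̃_j ∈ ℝ^{n×n} and b̃_j, η̃_j ∈ ℝⁿ. Let (p_j, q_j)_{j=0}^{N} be defined by p_0 = ξ ∈ ℝⁿ, q_0 = 0ₙ, and the recursion p_{j+1} = p_j + h X η̃_j, q_{j+1} = q_j + h X W̃_jᵀ σ(W̃_j p_{j+1} + b̃_j). Then q_N = Σ_{j=0}^{N−1} h X W̃_jᵀ σ( W̃_j ξ + d̃_j ), where d̃_j := W̃_j r̃_j + b̃_j and r̃_j := h X Σ_{i=0}^{j} η̃_i. In particular, the restricted flow ξ ↦ q_N has the form ξ ↦ Σ_{j=0}^{N−1} Ã_j σ(W̃_j ξ + d̃_j) with Ã_j = h X W̃_jᵀ. -/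
open Matrix

/-- Closed form of the restricted flow: with `p_0 = ξ`, `q_0 = 0` and the explicit
recursion `p_{j+1} = p_j + h X η̃_j`, `q_{j+1} = q_j + h X W̃_jᵀ σ(W̃_j p_{j+1} + b̃_j)`,
one has `q_N = Σ_{j<N} h X W̃_jᵀ σ(W̃_j ξ + d̃_j)` where `d̃_j = W̃_j r̃_j + b̃_j` and
`r̃_j = h X Σ_{i≤j} η̃_i`; i.e. `ξ ↦ q_N` is `ξ ↦ Σ_j Ã_j σ(W̃_j ξ + d̃_j)` with
`Ã_j = h X W̃_jᵀ`. -/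
theorem restricted_flow_closed_form {n : ℕ} (N : ℕ) (h : ℝ) (σ : ℝ → ℝ)
    (X : Matrix (Fin n) (Fin n) ℝ)
    (W' : ℕ → Matrix (Fin n) (Fin n) ℝ) (b' η' : ℕ → (Fin n → ℝ))
    (ξ : Fin n → ℝ) (p q : ℕ → (Fin n → ℝ))
    (hp0 : p 0 = ξ) (hq0 : q 0 = (fun _ => 0))
    (hp : ∀ j < N, p (j + 1) = p j + h • X.mulVec (η' j))
    (hq : ∀ j < N, q (j + 1) =
      q j + h • X.mulVec ((W' j)ᵀ.mulVec (entApp σ ((W' j).mulVec (p (j + 1)) + b' j)))) :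
    q N = ∑ j ∈ Finset.range N,
      h • X.mulVec ((W' j)ᵀ.mulVec (entApp σ ((W' j).mulVec ξ +
        ((W' j).mulVec (h • X.mulVec (∑ i ∈ Finset.range (j + 1), η' i)) + b' j)))) := by
  have hpj : ∀ j ≤ N, p j = ξ + h • X.mulVec (∑ i ∈ Finset.range j, η' i) := by
    intro j hj
    induction j with
    | zero => simp [hp0]
    | succ k ih =>
      have hk : k < N := hj
      rw [hp k hk, ih (le_of_lt hk), Finset.sum_range_succ, Matrix.mulVec_add, smul_add]
      abel
  have key : ∀ k ≤ N, q k = ∑ j ∈ Finset.range k,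
      h • X.mulVec ((W' j)ᵀ.mulVec (entApp σ ((W' j).mulVec ξ +
        ((W' j).mulVec (h • X.mulVec (∑ i ∈ Finset.range (j + 1), η' i)) + b' j)))) := by
    intro k hk
    induction k with
    | zero => simp [hq0]; rfl
    | succ m ih =>
      have hm : m < N := hk
      rw [hq m hm, ih (le_of_lt hm), Finset.sum_range_succ, hpj (m+1) hk,
        Matrix.mulVec_add, add_assoc]
  exact key N le_rfl
end
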